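/- Let G be a finite group and u a torsion element of V(ZG) of order n satisfying the PAP Property and Hertweck's vanishing theorem and the Berman–Higman theorem for its powers. Then \varepsilon_{G[m]}(u) = 0 for every m \ne n; equivalently, the support of the partial augmentation vector of u is concentrated on classes of elements of order exactly n (General Bovdi Property). -/

import Mathlib

/-!
For `0 < t < n`, PAP applied at the class of `1` rewrites the coefficient of `1` in `u ^ t`,
which vanishes by Berman–Higman, as `∑_{x ^ t = 1} u_x = ∑_{d ∣ t} ε_{G[d]}(u)`. Induction
along the divisor lattice then kills `ε_{G[m]}(u)` for every proper divisor `m` of `n`. If `m ∤ n`,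
every class of elements of order `m` has partial augmentation zero by Hertweck's theorem.
-/

open Finset MonoidAlgebra
open scoped Classical

noncomputable section

variable {G : Type*} [Group G] [Fintype G]

/-- Partial sum of coefficients of `a ∈ ℤG` over a subset `X` of `G`. -/
def pa (a : MonoidAlgebra ℤ G) (X : Finset G) : ℤ := ∑ x ∈ X, a.coeff x

/-- Partial augmentation of `a ∈ ℤG` at the conjugacy class `C`. -/
def paC (a : MonoidAlgebra ℤ G) (C : ConjClasses G) : ℤ :=
  ∑ x ∈ Finset.univ.filter (fun x => ConjClasses.mk x = C), a.coeff x

/-- The condition PAP(k) for a unit `u` of `ℤG`. -/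
def PAP (u : (MonoidAlgebra ℤ G)ˣ) (k : ℤ) : Prop :=
  ∀ C : ConjClasses G,
    paC (↑(u ^ k)) C =
      ∑ D : ConjClasses G,
        if ∃ x : G, ConjClasses.mk x = D ∧ ConjClasses.mk (x ^ k) = C
        then paC (↑u) D else 0

lemma IsConj.zpow {α : Type*} [Group α] {a b : α} (k : ℤ) (h : IsConj a b) :
    IsConj (a ^ k) (b ^ k) := by
  obtain ⟨c, rfl⟩ := isConj_iff.1 h
  exact isConj_iff.2 ⟨c, conj_zpow.symm⟩

lemma IsConj.orderOf_eq {α : Type*} [Group α] {a b : α} (h : IsConj a b) :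
    orderOf a = orderOf b := by
  obtain ⟨c, hc⟩ := h
  exact hc.orderOf_eq

lemma paC_mk_one (a : MonoidAlgebra ℤ G) : paC a (ConjClasses.mk 1) = a.coeff 1 := by
  have : univ.filter (fun x : G => ConjClasses.mk x = ConjClasses.mk 1) = {1} := by
    ext x
    simp [ConjClasses.mk_eq_mk_iff_isConj]
  rw [paC, this, sum_singleton]

lemma pa_filter_eq_sum_paC (a : MonoidAlgebra ℤ G) (P : G → Prop) [DecidablePred P]
    (hP : ∀ x y, IsConj x y → P x → P y) :
    pa a (univ.filter P) =
      ∑ D : ConjClasses G, if ∃ x, ConjClasses.mk x = D ∧ P x then paC a D else 0 := by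
  rw [pa, ← sum_fiberwise (univ.filter P) ConjClasses.mk]
  refine sum_congr rfl fun D _ => ?_
  split_ifs with hD
  · obtain ⟨x, rfl, hx⟩ := hD
    rw [paC, filter_filter]
    refine sum_congr (filter_congr fun y _ => ?_) fun _ _ => rfl
    rw [ConjClasses.mk_eq_mk_iff_isConj]
    exact ⟨fun h => h.2, fun h => ⟨hP x y h.symm hx, h⟩⟩
  · refine sum_eq_zero fun y hy => absurd ⟨y, ?_⟩ hD
    simp only [mem_filter, mem_univ, true_and] at hy
    exact ⟨hy.2, hy.1⟩

lemma PAP_iff (u : (MonoidAlgebra ℤ G)ˣ) (k : ℤ) :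
    PAP u k ↔ ∀ C, paC (↑(u ^ k)) C =
      pa (↑u : MonoidAlgebra ℤ G) (univ.filter fun x => ConjClasses.mk (x ^ k) = C) := by
  refine forall_congr' fun C => ?_
  rw [pa_filter_eq_sum_paC]
  exact fun x y hxy hx => (ConjClasses.mk_eq_mk_iff_isConj.2 (hxy.zpow k)).symm.trans hx

lemma PAP.pa_filter_zpow_eq_one {u : (MonoidAlgebra ℤ G)ˣ} {k : ℤ} (h : PAP u k) :
    pa (↑u : MonoidAlgebra ℤ G) (univ.filter fun x => x ^ k = 1) =
      (↑(u ^ k) : MonoidAlgebra ℤ G).coeff 1 := by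
  rw [← paC_mk_one, (PAP_iff u k).1 h]
  congr 1
  ext x
  simp [ConjClasses.mk_eq_mk_iff_isConj]

lemma pa_filter_pow_eq_one (a : MonoidAlgebra ℤ G) {t : ℕ} (ht : t ≠ 0) :
    pa a (univ.filter fun x => x ^ t = 1) =
      ∑ d ∈ t.divisors, pa a (univ.filter fun x => orderOf x = d) := by
  rw [pa, ← sum_fiberwise_of_maps_to (g := orderOf) (t := t.divisors)]
  · refine sum_congr rfl fun d hd => ?_
    rw [pa, filter_filter]
    refine sum_congr (filter_congr fun x _ => ?_) fun _ _ => rfl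
    refine ⟨And.right, fun hx => ⟨?_, hx⟩⟩
    exact orderOf_dvd_iff_pow_eq_one.1 (hx ▸ Nat.dvd_of_mem_divisors hd)
  · intro x hx
    simp only [mem_filter, mem_univ, true_and] at hx
    exact Nat.mem_divisors.2 ⟨orderOf_dvd_of_pow_eq_one hx, ht⟩

lemma eq_zero_of_sum_divisors_eq_zero {M : Type*} [AddCommMonoid M] {f : ℕ → M} {n : ℕ}
    (hf : ∀ t, 0 < t → t < n → ∑ d ∈ t.divisors, f d = 0) {t : ℕ} (ht : 0 < t)
    (htn : t < n) :
    f t = 0 := by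
  induction t using Nat.strong_induction_on with
  | _ t ih =>
    have hproper : ∑ d ∈ t.properDivisors, f d = 0 := sum_eq_zero fun d hd => by
      obtain ⟨hdt, hlt⟩ := Nat.mem_properDivisors.1 hd
      exact ih d hlt (Nat.pos_of_dvd_of_pos hdt ht) (hlt.trans htn)
    have hsum := hf t ht htn
    rwa [← Nat.cons_self_properDivisors ht.ne', sum_cons, hproper, add_zero] at hsum

lemma pa_filter_orderOf_eq_zero {a : MonoidAlgebra ℤ G} {m : ℕ}
    (h : ∀ x : G, orderOf x = m → paC a (ConjClasses.mk x) = 0) :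
    pa a (univ.filter fun x => orderOf x = m) = 0 := by
  rw [pa_filter_eq_sum_paC _ _ fun x y hxy hx => hxy.orderOf_eq ▸ hx]
  refine sum_eq_zero fun D _ => ?_
  split_ifs with hD
  · obtain ⟨x, rfl, hx⟩ := hD
    exact h x hx
  · rfl

theorem general_bovdi_of_PAP_general (u : (MonoidAlgebra ℤ G)ˣ) (n : ℕ) (hn : 0 < n)
    (hord : orderOf u = n)
    (hPAP : ∀ k : ℤ, PAP u k)
    (hHertweck : ∀ m : ℤ, ∀ D : ConjClasses G, ∀ x : G, ConjClasses.mk x = D →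
      ¬ (orderOf x ∣ orderOf (u ^ m)) → paC (↑(u ^ m)) D = 0)
    (hBH : ∀ m : ℤ, u ^ m ≠ 1 → (↑(u ^ m) : MonoidAlgebra ℤ G).coeff 1 = 0) :
    ∀ m : ℕ, m ≠ n →
      pa (↑u) (Finset.univ.filter (fun g : G => orderOf g = m)) = 0 := by
  intro m hm
  by_cases hdvd : m ∣ n
  · have hm0 : 0 < m := Nat.pos_of_dvd_of_pos hdvd hn
    refine eq_zero_of_sum_divisors_eq_zero
      (f := fun d => pa (↑u) (univ.filter fun g : G => orderOf g = d))
      (fun t ht0 htn => ?_) hm0 ((Nat.le_of_dvd hn hdvd).lt_of_ne hm)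
    have hut : u ^ (t : ℤ) ≠ 1 := by
      rw [zpow_natCast]
      exact pow_ne_one_of_lt_orderOf ht0.ne' (hord ▸ htn)
    rw [← pa_filter_pow_eq_one _ ht0.ne', ← hBH t hut, ← (hPAP t).pa_filter_zpow_eq_one]
    simp only [zpow_natCast]
  · refine pa_filter_orderOf_eq_zero fun x hx => ?_
    simpa only [zpow_one] using hHertweck 1 _ x rfl (by rwa [zpow_one, hord, hx])

/-- General Bovdi Property: a torsion unit `u` of order `n` in `V(ℤG)` satisfying the
PAP Property (and Hertweck's vanishing theorem and Berman–Higman for its powers) has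
`ε_{G[m]}(u) = 0` for every `m ≠ n`. -/
theorem general_bovdi_of_PAP (u : (MonoidAlgebra ℤ G)ˣ) (n : ℕ) (hn : 0 < n)
    (hord : orderOf u = n)
    (haug : ∑ x : G, (↑u : MonoidAlgebra ℤ G).coeff x = 1)
    (hPAP : ∀ k : ℤ, PAP u k)
    (hHertweck : ∀ m : ℤ, ∀ D : ConjClasses G, ∀ x : G, ConjClasses.mk x = D →
      ¬ (orderOf x ∣ orderOf (u ^ m)) → paC (↑(u ^ m)) D = 0)
    (hBH : ∀ m : ℤ, u ^ m ≠ 1 → (↑(u ^ m) : MonoidAlgebra ℤ G).coeff 1 = 0) :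
    ∀ m : ℕ, m ≠ n →
      pa (↑u) (Finset.univ.filter (fun g : G => orderOf g = m)) = 0 :=
  general_bovdi_of_PAP_general u n hn hord hPAP hHertweck hBH
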